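/- arXiv:1806.06290 — 4 statements merged into one kernel-verified Lean document; each statement's English description precedes it below -/
import Mathlib

section
/- Let φ be a linear threshold function on m input bits represented by weights w ∈ ℤ^m and threshold θ ∈ ℤ, and let S be the set of inputs on which φ evaluates to 1. Then there is a decision tree computing φ whose number of leaves is at most |S|·m + 1; consequently the set S can be enumerated in time |S|·poly(m) (assuming weights of poly(m) bit complexity). -/
/-- Binary decision trees over `m` Boolean variables, with ±1 leaves encoded as
`Bool` (`true` = 1, `false` = -1). -/
inductive DTree (m : ℕ) : Type
  | leaf (b : Bool)
  | node (i : Fin m) (t0 t1 : DTree m)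

/-- Evaluation of a decision tree: at a node querying variable `i`, follow the
subtree corresponding to the value of `x i`. -/
def DTree.eval {m : ℕ} : DTree m → (Fin m → Bool) → Bool
  | .leaf b, _ => b
  | .node i t0 t1, x => if x i then t1.eval x else t0.eval x

/-- Number of leaves of a decision tree. -/
def DTree.leaves {m : ℕ} : DTree m → ℕ
  | .leaf _ => 1
  | .node _ t0 t1 => t0.leaves + t1.leaves

/-!
Build the pruned decision tree: on the current subcube, make a leaf as soon as `f` is constant,
otherwise query a free variable. By induction on the number `h` of free variables, a subtree over
a subcube containing `n` one-inputs has at most `n * h + 1` leaves: a constant subcube is a single leaf, and a non-constant one contains a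
one-input, which pays for the `+ 1` of the second child.
-/

open Finset

theorem Finset.card_filter_eq_false_add_card_filter_eq_true {α : Type*} (s : Finset α)
    (g : α → Bool) (p : α → Prop) [DecidablePred p] :
    #{x ∈ s | g x = false ∧ p x} + #{x ∈ s | g x = true ∧ p x} = #{x ∈ s | p x} := by
  classical
  rw [← card_union_of_disjoint (disjoint_filter.2 fun x _ h₀ h₁ => by simp [h₀.1] at h₁)]
  congr 1
  ext x
  by_cases h : g x <;> simp [h]

namespace DTree

variable {m : ℕ}

theorem eval_node_eq {f : (Fin m → Bool) → Bool} {s : Finset (Fin m → Bool)} {i : Fin m}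
    {T₀ T₁ : DTree m} (h₀ : ∀ x ∈ s, x i = false → T₀.eval x = f x)
    (h₁ : ∀ x ∈ s, x i = true → T₁.eval x = f x) :
    ∀ x ∈ s, (node i T₀ T₁).eval x = f x := by
  intro x hx
  cases hxi : x i
  · simpa [eval, hxi] using h₀ x hx hxi
  · simpa [eval, hxi] using h₁ x hx hxi

theorem exists_eval_eq_leaves_le (f : (Fin m → Bool) → Bool) (l : List (Fin m)) :
    ∀ s : Finset (Fin m → Bool), (∀ x ∈ s, ∀ y ∈ s, ∀ j ∉ l, x j = y j) →
      ∃ T : DTree m, (∀ x ∈ s, T.eval x = f x) ∧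
        T.leaves ≤ #{x ∈ s | f x = true} * l.length + 1 := by
  induction l with
  | nil =>
    intro s hs
    rcases s.eq_empty_or_nonempty with rfl | ⟨x₀, hx₀⟩
    · exact ⟨leaf true, by simp, by simp [leaves]⟩
    refine ⟨leaf (f x₀), fun x hx => ?_, by simp [leaves]⟩
    rw [funext fun j => hs x₀ hx₀ x hx j List.not_mem_nil]
    rfl
  | cons i l ih =>
    intro s hs
    by_cases hconst : ∃ b, ∀ x ∈ s, f x = b
    · obtain ⟨b, hb⟩ := hconst
      exact ⟨leaf b, fun x hx => (hb x hx).symm, by simp [leaves]⟩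
    push Not at hconst
    obtain ⟨x₀, hx₀, hfx₀⟩ := hconst false
    have hsplit : ∀ b : Bool,
        ∀ x ∈ {x ∈ s | x i = b}, ∀ y ∈ {x ∈ s | x i = b}, ∀ j ∉ l, x j = y j := by
      intro b x hx y hy j hj
      simp only [mem_filter] at hx hy
      by_cases hji : j = i
      · subst hji; rw [hx.2, hy.2]
      · exact hs x hx.1 y hy.1 j (by simp [hji, hj])
    obtain ⟨T₀, hT₀, hl₀⟩ := ih _ (hsplit false)
    obtain ⟨T₁, hT₁, hl₁⟩ := ih _ (hsplit true)
    refine ⟨node i T₀ T₁, eval_node_eq (fun x hx hxi => hT₀ x (by simp [hx, hxi]))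
      (fun x hx hxi => hT₁ x (by simp [hx, hxi])), ?_⟩
    have hpos : 0 < #{x ∈ s | f x = true} := card_pos.2 ⟨x₀, by simpa [hx₀] using hfx₀⟩
    have := card_filter_eq_false_add_card_filter_eq_true s (· i) (f · = true)
    simp only [filter_filter] at hl₀ hl₁
    simp only [leaves, List.length_cons]
    nlinarith

theorem exists_eval_eq_leaves_le_card_mul (f : (Fin m → Bool) → Bool) :
    ∃ T : DTree m, (∀ x, T.eval x = f x) ∧ T.leaves ≤ #{x | f x = true} * m + 1 := by
  obtain ⟨T, hT, hleaves⟩ := exists_eval_eq_leaves_le f (List.finRange m) univ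
    (fun _ _ _ _ j hj => absurd (List.mem_finRange j) hj)
  exact ⟨T, fun x => hT x (mem_univ x), by simpa using hleaves⟩

end DTree

/-- for the linear threshold function `φ(x) = sgn(⟨w,x⟩ − θ)` (with
`sgn 0 = -1`, i.e. `φ x = true` iff `θ < ⟨w,x⟩`) on `m` bits with integer weights,
there is a decision tree computing `φ` with at most `|S|·m + 1` leaves, where
`S` is the set of inputs on which `φ` evaluates to 1. -/
theorem stmt_11 (m : ℕ) (w : Fin m → ℤ) (θ : ℤ) :
    ∃ T : DTree m,
      (∀ x : Fin m → Bool,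
        T.eval x = decide (θ < ∑ i, w i * (if x i then 1 else -1))) ∧
      T.leaves ≤
        Set.ncard {x : Fin m → Bool |
          θ < ∑ i, w i * (if x i then 1 else -1)} * m + 1 := by
  obtain ⟨T, hT, hleaves⟩ := DTree.exists_eval_eq_leaves_le_card_mul fun x =>
    decide (θ < ∑ i, w i * (if x i then 1 else -1))
  refine ⟨T, hT, ?_⟩
  rw [Set.ncard_eq_toFinset_card', Set.toFinset_ofPred]
  simpa using hleaves
end

section
/- In the decision tree constructed for a satisfiable-vs-falsifiable recursion (where a node becomes a -1 leaf iff no extension satisfies φ and a 1 leaf iff no extension falsifies φ), for every internal node v of height h ≥ 1, the number of leaves labeled -1 in the subtree rooted at v is at most h times the number of leaves labeled 1. -/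
/-- Label-free binary decision trees with ±1 leaves encoded as `Bool`
(`true` = 1, `false` = -1). -/
inductive BTree : Type
  | leaf (b : Bool)
  | node (t0 t1 : BTree)

/-- Height of a tree (0 for leaves). -/
def BTree.height : BTree → ℕ
  | .leaf _ => 0
  | .node t0 t1 => max t0.height t1.height + 1

/-- Number of leaves carrying the label `b`. -/
def BTree.count (b : Bool) : BTree → ℕ
  | .leaf b' => if b' = b then 1 else 0
  | .node t0 t1 => t0.count b + t1.count b

/-- The structural property of the satisfiable-vs-falsifiable recursion: no
internal node has both children being `-1` leaves, and no internal node has both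
children being `1` leaves. -/
def BTree.Good : BTree → Prop
  | .leaf _ => True
  | .node t0 t1 =>
      ¬(t0 = .leaf false ∧ t1 = .leaf false) ∧
      ¬(t0 = .leaf true ∧ t1 = .leaf true) ∧ t0.Good ∧ t1.Good

lemma BTree.pos : ∀ t : BTree, t.Good → (∀ b, t ≠ .leaf b) → 1 ≤ t.count true := by
  intro t
  induction t with
  | leaf b => intro _ h; exact absurd rfl (h b)
  | node t0 t1 ih0 ih1 =>
    intro hG _
    obtain ⟨h00, h11, g0, g1⟩ := hG
    simp only [BTree.count]
    cases t0 with
    | leaf b0 =>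
      cases t1 with
      | leaf b1 => cases b0 <;> cases b1 <;> simp_all [BTree.count]
      | node a b =>
        cases b0
        · have := ih1 g1 (by intro b h; cases h)
          omega
        · simp [BTree.count]
    | node a b =>
      have := ih0 g0 (by intro b h; cases h)
      omega

lemma BTree.aux : ∀ t : BTree, t.Good → (∀ b, t ≠ .leaf b) →
    t.count false ≤ t.height * t.count true := by
  intro t
  induction t with
  | leaf b => intro _ h; exact absurd rfl (h b)
  | node t0 t1 ih0 ih1 =>
    intro hG _
    obtain ⟨h00, h11, g0, g1⟩ := hG
    cases t0 with
    | leaf b0 =>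
      cases t1 with
      | leaf b1 => cases b0 <;> cases b1 <;> simp_all [BTree.count, BTree.height]
      | node a b =>
        have hm := ih1 g1 (by intro b h; cases h)
        have hp := BTree.pos _ g1 (by intro b h; cases h)
        set H := (BTree.node a b).height with hH
        set A := (BTree.node a b).count true with hA
        set C := (BTree.node a b).count false with hC
        cases b0
        · show 1 + C ≤ (max 0 H + 1) * (0 + A)
          rw [Nat.zero_max]
          have h2 : (H + 1) * (0 + A) = H * A + A := by ring
          omega
        · show 0 + C ≤ (max 0 H + 1) * (1 + A)
          rw [Nat.zero_max]
          have h2 : (H + 1) * (1 + A) = H * A + H + A + 1 := by ring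
          omega
    | node a b =>
      have hm0 := ih0 g0 (by intro b h; cases h)
      have hp0 := BTree.pos _ g0 (by intro b h; cases h)
      set H := (BTree.node a b).height with hH
      set A := (BTree.node a b).count true with hA
      set C := (BTree.node a b).count false with hC
      cases t1 with
      | leaf b1 =>
        cases b1
        · show C + 1 ≤ (max H 0 + 1) * (A + 0)
          rw [Nat.max_zero]
          have h2 : (H + 1) * (A + 0) = H * A + A := by ring
          omega
        · show C + 0 ≤ (max H 0 + 1) * (A + 1)
          rw [Nat.max_zero]
          have h2 : (H + 1) * (A + 1) = H * A + H + A + 1 := by ring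
          omega
      | node c d =>
        have hm1 := ih1 g1 (by intro b h; cases h)
        set H1 := (BTree.node c d).height with hH1
        set A1 := (BTree.node c d).count true with hA1
        set C1 := (BTree.node c d).count false with hC1
        show C + C1 ≤ (max H H1 + 1) * (A + A1)
        have hM0 : H ≤ max H H1 := le_max_left _ _
        have hM1 : H1 ≤ max H H1 := le_max_right _ _
        calc C + C1 ≤ H * A + H1 * A1 := by omega
          _ ≤ max H H1 * A + max H H1 * A1 :=
            Nat.add_le_add (Nat.mul_le_mul_right _ hM0) (Nat.mul_le_mul_right _ hM1)
          _ = max H H1 * (A + A1) := by ring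
          _ ≤ (max H H1 + 1) * (A + A1) := Nat.mul_le_mul_right _ (Nat.le_succ _)

/-- in a decision tree produced by the satisfiable-vs-falsifiable
recursion, every internal node of height `h ≥ 1` has at most `h` times as many
`-1`-labeled leaves as `1`-labeled leaves in its subtree. -/
theorem stmt_12 (T : BTree) (hT : ∃ t0 t1, T = .node t0 t1) (hGood : T.Good) :
    T.count false ≤ T.height * T.count true := by
  obtain ⟨t0, t1, rfl⟩ := hT
  exact BTree.aux _ hGood (by intro b h; cases h)
end

section
/- Let h(x_1,…,x_s) = sgn(Σ_{i≤s} w_i x_i − θ) be an unweighted majority gate (|w_i| = 1 for all i, |θ| ≤ s+1, θ a half-integer). Let f, g_1, …, g_s : {-1,1}^n → {-1,1} satisfy Corr(f, g_i) ≤ 1/(16s) for all i and Corr(f, 1) ≤ 1/(16s) where 1 is the constant-1 function. Then Corr(f, h(g_1,…,g_s)) ≤ 1 − 1/(8s). -/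
/-!
Round the threshold to the half-integer `c = ⌊θ⌋ + 1/2`: since `S = ∑ wᵢ gᵢ` is an integer,
`h = sgn (S - θ) = sgn T` for `T = S - c`, and now `1/2 ≤ |T| ≤ M := 2s + 3/2`. For `u = f h = ±1`
and `v = |T|`, the line through `(1/2, 1)` and `(-M, -1)` gives `(M + 1/2) u ≤ M - 1/2 + 2 u v`
pointwise, and `u v = f T`; averaging gives `(2s + 2) Corr(f, h) ≤ 2s + 1 + 2 |E[f T]|`.
By linearity `|E[f T]| ≤ (s + |c|) / (16 s)` is small, which forces `Corr(f, h) ≤ 1 - 1/(8s)`.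
-/

open Finset
open scoped BigOperators

lemma ite_pos_mul_self (t : ℝ) : (if 0 < t then (1 : ℝ) else -1) * t = |t| := by
  split_ifs with h
  · rw [one_mul, abs_of_pos h]
  · rw [neg_one_mul, abs_of_nonpos (not_lt.mp h)]

lemma Int.lt_cast_iff_floor_add_half_lt (θ : ℝ) (k : ℤ) : θ < k ↔ (⌊θ⌋ : ℝ) + 1 / 2 < k := by
  rw [← Int.floor_lt]
  constructor
  · intro h
    have : (⌊θ⌋ : ℝ) + 1 ≤ k := by exact_mod_cast h
    linarith
  · intro h
    exact_mod_cast (by linarith : (⌊θ⌋ : ℝ) < k)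

lemma Int.half_le_abs_cast_sub_floor_add_half (θ : ℝ) (k : ℤ) :
    1 / 2 ≤ |(k : ℝ) - (⌊θ⌋ + 1 / 2)| := by
  have hk : (k : ℝ) - (⌊θ⌋ + 1 / 2) = ((k - ⌊θ⌋ : ℤ) : ℝ) - 1 / 2 := by push_cast; ring
  rw [hk]
  rcases le_or_gt (k - ⌊θ⌋) 0 with h | h
  · have : ((k - ⌊θ⌋ : ℤ) : ℝ) ≤ 0 := by exact_mod_cast h
    rw [abs_of_neg (by linarith)]; linarith
  · have : (1 : ℝ) ≤ ((k - ⌊θ⌋ : ℤ) : ℝ) := by exact_mod_cast h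
    rw [abs_of_pos (by linarith)]; linarith

lemma Int.abs_floor_add_half_le (θ : ℝ) : |(⌊θ⌋ : ℝ) + 1 / 2| ≤ |θ| + 1 / 2 := by
  have h₁ := Int.floor_le θ
  have h₂ := Int.lt_floor_add_one θ
  rw [abs_le]
  constructor <;> linarith [le_abs_self θ, neg_abs_le θ]

lemma exists_intCast_eq_sum_of_abs_eq_one {ι : Type*} (s : Finset ι) (a : ι → ℝ)
    (ha : ∀ i ∈ s, |a i| = 1) : ∃ k : ℤ, ∑ i ∈ s, a i = k := by
  refine ⟨∑ i ∈ s, if 0 < a i then 1 else -1, ?_⟩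
  push_cast
  refine sum_congr rfl fun i hi => ?_
  rcases (abs_eq zero_le_one).mp (ha i hi) with h | h <;> simp [h]

lemma abs_sum_le_card_of_abs_eq_one {ι : Type*} [Fintype ι] (a : ι → ℝ) (ha : ∀ i, |a i| = 1) :
    |∑ i, a i| ≤ Fintype.card ι := by
  simpa [ha] using abs_sum_le_sum_abs a univ

lemma abs_ite_one_neg_one (p : Prop) [Decidable p] : |if p then (1 : ℝ) else -1| = 1 := by
  split_ifs <;> simp

lemma mul_le_chord_of_abs_eq_one {u v M : ℝ} (hu : |u| = 1) (hv : 1 / 2 ≤ v) (hvM : v ≤ M) :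
    (M + 1 / 2) * u ≤ M - 1 / 2 + 2 * (u * v) := by
  rcases (abs_eq zero_le_one).mp hu with rfl | rfl <;> linarith

section Correlation

variable {α : Type*} [Fintype α]

lemma expect_mul_sum_sub {ι : Type*} [Fintype ι] (F : α → ℝ) (G : ι → α → ℝ) (w : ι → ℝ)
    (c : ℝ) :
    𝔼 x, F x * (∑ i, w i * G i x - c) = ∑ i, w i * 𝔼 x, F x * G i x - c * 𝔼 x, F x := by
  simp_rw [mul_sub, mul_sum, expect_sub_distrib, expect_sum_comm, mul_expect]
  congr 1
  · exact sum_congr rfl fun i _ => expect_congr rfl fun x _ => by ring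
  · exact expect_congr rfl fun x _ => by ring

lemma abs_expect_mul_sum_sub_le {ι : Type*} [Fintype ι] (F : α → ℝ) (G : ι → α → ℝ)
    (w : ι → ℝ) (c ε : ℝ) (hG : ∀ i, |𝔼 x, F x * G i x| ≤ ε) (h1 : |𝔼 x, F x| ≤ ε) :
    |𝔼 x, F x * (∑ i, w i * G i x - c)| ≤ (∑ i, |w i| + |c|) * ε := by
  rw [expect_mul_sum_sub, add_mul, sum_mul]
  calc |∑ i, w i * 𝔼 x, F x * G i x - c * 𝔼 x, F x|
      ≤ |∑ i, w i * 𝔼 x, F x * G i x| + |c * 𝔼 x, F x| := abs_sub _ _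
    _ ≤ ∑ i, |w i| * ε + |c| * ε := by
      gcongr
      · refine (abs_sum_le_sum_abs _ _).trans (sum_le_sum fun i _ => ?_)
        rw [abs_mul]
        exact mul_le_mul_of_nonneg_left (hG i) (abs_nonneg _)
      · rw [abs_mul]
        exact mul_le_mul_of_nonneg_left h1 (abs_nonneg _)

variable [Nonempty α]

lemma expect_mul_sign_le {F T : α → ℝ} {M : ℝ} (hF : ∀ x, |F x| = 1)
    (hT : ∀ x, 1 / 2 ≤ |T x| ∧ |T x| ≤ M) :
    (M + 1 / 2) * 𝔼 x, F x * (if 0 < T x then 1 else -1)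
      ≤ M - 1 / 2 + 2 * 𝔼 x, F x * T x := by
  have pointwise : ∀ x, (M + 1 / 2) * (F x * (if 0 < T x then 1 else -1))
      ≤ M - 1 / 2 + 2 * (F x * T x) := by
    intro x
    set σ : ℝ := if 0 < T x then 1 else -1
    have hσ : |σ| = 1 := abs_ite_one_neg_one _
    have hσσ : σ * σ = 1 := by rw [← abs_mul_abs_self, hσ, one_mul]
    have hFT : F x * T x = F x * σ * |T x| := by
      rw [← ite_pos_mul_self]
      linear_combination (-(F x * T x)) * hσσ
    rw [hFT]
    exact mul_le_chord_of_abs_eq_one (by rw [abs_mul, hF, hσ, one_mul]) (hT x).1 (hT x).2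
  calc (M + 1 / 2) * 𝔼 x, F x * (if 0 < T x then 1 else -1)
      = 𝔼 x, (M + 1 / 2) * (F x * (if 0 < T x then 1 else -1)) := mul_expect _ _ _
    _ ≤ 𝔼 x, (M - 1 / 2 + 2 * (F x * T x)) := expect_le_expect fun x _ => pointwise x
    _ = M - 1 / 2 + 2 * 𝔼 x, F x * T x := by
      rw [expect_add_distrib, Fintype.expect_const, mul_expect]

lemma abs_expect_mul_sign_le {F T : α → ℝ} {M : ℝ} (hF : ∀ x, |F x| = 1)
    (hT : ∀ x, 1 / 2 ≤ |T x| ∧ |T x| ≤ M) :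
    (M + 1 / 2) * |𝔼 x, F x * (if 0 < T x then 1 else -1)|
      ≤ M - 1 / 2 + 2 * |𝔼 x, F x * T x| := by
  rcases abs_cases (𝔼 x, F x * (if 0 < T x then 1 else -1)) with ⟨h, -⟩ | ⟨h, -⟩ <;> rw [h]
  · linarith [expect_mul_sign_le hF hT, le_abs_self (𝔼 x, F x * T x)]
  · have hF' : ∀ x, |-F x| = 1 := fun x => (abs_neg _).trans (hF x)
    have := expect_mul_sign_le hF' hT
    simp only [neg_mul, expect_neg_distrib] at this
    linarith [neg_abs_le (𝔼 x, F x * T x)]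

end Correlation

theorem abs_expect_mul_majority_le {α : Type*} [Fintype α] [Nonempty α] (s : ℕ) (hs : 1 ≤ s)
    (w : Fin s → ℝ) (θ : ℝ) (hw : ∀ i, |w i| = 1) (hθ : |θ| ≤ s + 1)
    (F : α → ℝ) (G : Fin s → α → ℝ) (hF : ∀ x, |F x| = 1) (hG : ∀ i x, |G i x| = 1)
    (hcorr : ∀ i, |𝔼 x, F x * G i x| ≤ 1 / (16 * s)) (hconst : |𝔼 x, F x| ≤ 1 / (16 * s)) :
    |𝔼 x, F x * (if 0 < ∑ i, w i * G i x - θ then 1 else -1)| ≤ 1 - 1 / (8 * s) := by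
  set c : ℝ := ⌊θ⌋ + 1 / 2
  have hwG : ∀ x i, |w i * G i x| = 1 := fun x i => by rw [abs_mul, hw, hG, one_mul]
  have hc : |c| ≤ s + 3 / 2 := by linarith [Int.abs_floor_add_half_le θ]
  have hint : ∀ x, ∃ k : ℤ, ∑ i, w i * G i x = k :=
    fun x => exists_intCast_eq_sum_of_abs_eq_one univ _ fun i _ => hwG x i
  have hsign : ∀ x, (0 < ∑ i, w i * G i x - θ ↔ 0 < ∑ i, w i * G i x - c) := fun x => by
    obtain ⟨k, hk⟩ := hint x
    rw [hk, sub_pos, sub_pos]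
    exact Int.lt_cast_iff_floor_add_half_lt θ k
  have hT : ∀ x, 1 / 2 ≤ |∑ i, w i * G i x - c| ∧ |∑ i, w i * G i x - c| ≤ 2 * s + 3 / 2 := by
    intro x
    obtain ⟨k, hk⟩ := hint x
    refine ⟨hk ▸ Int.half_le_abs_cast_sub_floor_add_half θ k, ?_⟩
    have hS := abs_sum_le_card_of_abs_eq_one _ (hwG x)
    rw [Fintype.card_fin] at hS
    linarith [abs_sub (∑ i, w i * G i x) c]
  have hcorrT : |𝔼 x, F x * (∑ i, w i * G i x - c)| ≤ (2 * s + 3 / 2) * (1 / (16 * s)) := by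
    refine (abs_expect_mul_sum_sub_le F G w c _ hcorr hconst).trans ?_
    simp only [hw, sum_const, card_univ, Fintype.card_fin, nsmul_eq_mul, mul_one]
    exact mul_le_mul_of_nonneg_right (by linarith) (by positivity)
  have key := abs_expect_mul_sign_le hF hT
  simp_rw [← hsign] at key
  set ε : ℝ := 1 / (16 * s)
  have hs' : (1 : ℝ) ≤ s := by exact_mod_cast hs
  have hε : 16 * s * ε = 1 := by simp only [ε]; field_simp
  have hε' : 1 / (8 * s) = 2 * ε := by simp only [ε]; field_simp; ring
  rw [hε']
  refine le_of_mul_le_mul_left ?_ (by positivity : (0 : ℝ) < 2 * s + 2)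
  nlinarith

lemma sum_div_two_pow_eq_expect {n : ℕ} (φ : (Fin n → Bool) → ℝ) :
    (∑ x, φ x) / 2 ^ n = 𝔼 x, φ x := by
  simp [Fintype.expect_eq_sum_div_card]

theorem stmt_14_general (n s : ℕ) (hs : 1 ≤ s) (w : Fin s → ℝ) (θ : ℝ)
    (hw : ∀ i, |w i| = 1) (hθ : |θ| ≤ (s : ℝ) + 1)
    (f : (Fin n → Bool) → Bool) (g : Fin s → (Fin n → Bool) → Bool)
    (hcorr : ∀ i : Fin s,
      |(∑ x : Fin n → Bool,
          (if f x then (1 : ℝ) else -1) * (if g i x then (1 : ℝ) else -1)) / 2 ^ n|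
        ≤ 1 / (16 * s))
    (hconst : |(∑ x : Fin n → Bool, (if f x then (1 : ℝ) else -1)) / 2 ^ n|
        ≤ 1 / (16 * s)) :
    |(∑ x : Fin n → Bool,
        (if f x then (1 : ℝ) else -1) *
          (if 0 < (∑ i, w i * (if g i x then (1 : ℝ) else -1)) - θ then (1 : ℝ) else -1))
        / 2 ^ n|
      ≤ 1 - 1 / (8 * s) := by
  simp only [sum_div_two_pow_eq_expect] at hcorr hconst ⊢
  exact abs_expect_mul_majority_le s hs w θ hw hθ _ _ (fun x => abs_ite_one_neg_one (f x))
    (fun i x => abs_ite_one_neg_one (g i x)) hcorr hconst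

/-- let `h` be an unweighted majority gate of fan-in `s` (weights
`±1`, half-integer threshold `θ` with `|θ| ≤ s+1`). If `Corr(f, gᵢ) ≤ 1/(16s)`
for all `i` and `Corr(f, 1) ≤ 1/(16s)`, then `Corr(f, h(g₁,…,g_s)) ≤ 1 − 1/(8s)`.
(Here `h(g₁,…,g_s)(x) = sgn(Σᵢ wᵢ gᵢ(x) − θ)` with `sgn 0 = -1`, and Boolean
values are `±1` via `if · then 1 else -1`.) -/
theorem stmt_14 (n s : ℕ) (hs : 1 ≤ s) (w : Fin s → ℝ) (θ : ℝ)
    (hw : ∀ i, |w i| = 1) (hθ : |θ| ≤ (s : ℝ) + 1) (hθhalf : ∃ z : ℤ, θ = z / 2)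
    (f : (Fin n → Bool) → Bool) (g : Fin s → (Fin n → Bool) → Bool)
    (hcorr : ∀ i : Fin s,
      |(∑ x : Fin n → Bool,
          (if f x then (1 : ℝ) else -1) * (if g i x then (1 : ℝ) else -1)) / 2 ^ n|
        ≤ 1 / (16 * s))
    (hconst : |(∑ x : Fin n → Bool, (if f x then (1 : ℝ) else -1)) / 2 ^ n|
        ≤ 1 / (16 * s)) :
    |(∑ x : Fin n → Bool,
        (if f x then (1 : ℝ) else -1) *
          (if 0 < (∑ i, w i * (if g i x then (1 : ℝ) else -1)) - θ then (1 : ℝ) else -1))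
        / 2 ^ n|
      ≤ 1 - 1 / (8 * s) :=
  stmt_14_general n s hs w θ hw hθ f g hcorr hconst
end

section
/- Let w ∈ ℝ^n be sorted so that |w_1| ≥ … ≥ |w_n|, and suppose there exist indices i_1 < i_2 < … < i_r such that |w_{i_{j+1}}| ≤ |w_{i_j}|/3 for all j < r. Then for any real θ'' and any interval J of length at most |w_{i_r}|/2, there is at most one assignment (y_{i_1},…,y_{i_r}) ∈ {-1,1}^r such that Σ_{j=1}^r w_{i_j} y_{i_j} ∈ J. -/
/-- let `w` be sorted with `|w₁| ≥ … ≥ |w_n|` and let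
`i₁ < … < i_r` be indices with `|w_{i_{j+1}}| ≤ |w_{i_j}|/3`. Then for any
interval `[a,b]` of length at most `|w_{i_r}|/2`, at most one sign assignment
`(y_{i_1},…,y_{i_r}) ∈ {-1,1}^r` makes `Σⱼ w_{i_j} y_{i_j}` land in the interval. -/
theorem stmt_15 (n r : ℕ) (hr : 0 < r) (w : Fin n → ℝ)
    (hsort : ∀ i j : Fin n, i ≤ j → |w j| ≤ |w i|)
    (idx : Fin r → Fin n) (hmono : StrictMono idx)
    (hdec : ∀ (j : ℕ) (hj : j + 1 < r),
      |w (idx ⟨j + 1, hj⟩)| ≤ |w (idx ⟨j, Nat.lt_of_succ_lt hj⟩)| / 3)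
    (hpos : 0 < |w (idx ⟨r - 1, Nat.sub_lt hr one_pos⟩)|)
    (a b : ℝ) (hab : b - a ≤ |w (idx ⟨r - 1, Nat.sub_lt hr one_pos⟩)| / 2) :
    ∀ y y' : Fin r → Bool,
      (∑ j, w (idx j) * (if y j then 1 else -1)) ∈ Set.Icc a b →
      (∑ j, w (idx j) * (if y' j then 1 else -1)) ∈ Set.Icc a b →
      y = y' := by
  intro y y' hy hy'
  by_contra hne
  set last : Fin r := ⟨r - 1, Nat.sub_lt hr one_pos⟩ with hlast
  -- tail sum bound
  have tail : ∀ m : ℕ, ∀ j : Fin r, r - 1 - j.val = m →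
      ∑ k ∈ Finset.Ioi j, |w (idx k)| ≤ |w (idx j)| / 2 := by
    intro m
    induction m with
    | zero =>
      intro j hj
      have hempty : Finset.Ioi j = ∅ := by
        ext k
        simp only [Finset.mem_Ioi, Finset.notMem_empty, iff_false, not_lt, Fin.le_def]
        have := k.isLt
        omega
      rw [hempty, Finset.sum_empty]
      positivity
    | succ m ih =>
      intro j hj
      have hj1 : j.val + 1 < r := by omega
      set j' : Fin r := ⟨j.val + 1, hj1⟩ with hj'
      have hins : Finset.Ioi j = insert j' (Finset.Ioi j') := by
        ext k
        simp only [Finset.mem_Ioi, Finset.mem_insert, Fin.lt_def, Fin.ext_iff, hj']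
        omega
      have hnm : j' ∉ Finset.Ioi j' := by simp
      rw [hins, Finset.sum_insert hnm]
      have h1 := ih j' (by simp only [hj']; omega)
      have h2 : |w (idx j')| ≤ |w (idx j)| / 3 := hdec j.val hj1
      linarith
  -- minimal differing index
  have hS : (Finset.univ.filter (fun k => y k ≠ y' k)).Nonempty := by
    by_contra h
    apply hne
    funext k
    by_contra hk
    exact h ⟨k, by simp [hk]⟩
  set j := (Finset.univ.filter (fun k => y k ≠ y' k)).min' hS with hjdef
  have hjmem : y j ≠ y' j := by
    have := Finset.min'_mem _ hS
    simpa using this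
  have hmin : ∀ k, k < j → y k = y' k := by
    intro k hk
    by_contra hk'
    have hle : j ≤ k := Finset.min'_le _ k (by simp [hk'])
    exact absurd hk (not_lt.mpr hle)
  set s : Bool → ℝ := fun c => if c then 1 else -1 with hs
  set f : Fin r → ℝ := fun k => w (idx k) * (s (y k) - s (y' k)) with hf
  have hD : ∑ k, f k = (∑ k, w (idx k) * (if y k then 1 else -1))
      - (∑ k, w (idx k) * (if y' k then 1 else -1)) := by
    rw [← Finset.sum_sub_distrib]
    exact Finset.sum_congr rfl (fun k _ => by simp [hf, hs, mul_sub])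
  have habs : |∑ k, f k| ≤ b - a := by
    rw [hD]
    rw [abs_sub_le_iff]
    constructor <;> [linarith [hy.1, hy.2, hy'.1, hy'.2]; linarith [hy.1, hy.2, hy'.1, hy'.2]]
  -- restrict to Ici j
  have hsub : ∑ k, f k = ∑ k ∈ Finset.Ici j, f k := by
    refine (Finset.sum_subset (Finset.subset_univ _) ?_).symm
    intro k _ hk
    have hkj : k < j := by simpa using hk
    simp [hf, hmin k hkj]
  have hIci : Finset.Ici j = insert j (Finset.Ioi j) := (Finset.Ioi_insert j).symm
  have hnmj : j ∉ Finset.Ioi j := by simp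
  have hsplit : ∑ k, f k = f j + ∑ k ∈ Finset.Ioi j, f k := by
    rw [hsub, hIci, Finset.sum_insert hnmj]
  have hfj : |f j| = 2 * |w (idx j)| := by
    have : |s (y j) - s (y' j)| = 2 := by
      cases hy1 : y j <;> cases hy2 : y' j
      · exact absurd (hy1.trans hy2.symm) hjmem
      · simp only [hs]; norm_num
      · simp only [hs]; norm_num
      · exact absurd (hy1.trans hy2.symm) hjmem
    rw [hf]
    simp only []
    rw [abs_mul, this]
    ring
  have htailf : |∑ k ∈ Finset.Ioi j, f k| ≤ |w (idx j)| := by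
    calc |∑ k ∈ Finset.Ioi j, f k| ≤ ∑ k ∈ Finset.Ioi j, |f k| :=
          Finset.abs_sum_le_sum_abs _ _
      _ ≤ ∑ k ∈ Finset.Ioi j, 2 * |w (idx k)| := by
          refine Finset.sum_le_sum fun k _ => ?_
          have hb : |s (y k) - s (y' k)| ≤ 2 := by
            cases y k <;> cases y' k <;> simp only [hs] <;> norm_num
          calc |f k| = |w (idx k)| * |s (y k) - s (y' k)| := by rw [hf]; exact abs_mul _ _
            _ ≤ |w (idx k)| * 2 := by
                exact mul_le_mul_of_nonneg_left hb (abs_nonneg _)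
            _ = 2 * |w (idx k)| := by ring
      _ = 2 * ∑ k ∈ Finset.Ioi j, |w (idx k)| := by rw [Finset.mul_sum]
      _ ≤ 2 * (|w (idx j)| / 2) := by
          have := tail (r - 1 - j.val) j rfl
          linarith
      _ = |w (idx j)| := by ring
  have hlow : |w (idx j)| ≤ |∑ k, f k| := by
    have h1 : |f j| ≤ |∑ k, f k| + |∑ k ∈ Finset.Ioi j, f k| := by
      have : f j = (∑ k, f k) - ∑ k ∈ Finset.Ioi j, f k := by
        rw [hsplit]; ring
      rw [this]
      exact abs_sub _ _
    rw [hfj] at h1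
    linarith
  have hjlast : |w (idx last)| ≤ |w (idx j)| := by
    have hle : j ≤ last := by
      rw [Fin.le_def]
      have := j.isLt
      simp only [hlast]
      omega
    exact hsort _ _ (hmono.monotone hle)
  linarith
end
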